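/- Let $f:\mathbb{R}^N\times\mathbb{R}\to\mathbb{R}$ satisfy $|f(x,u)|\le\sum_{i=1}^m\gamma_i\,\xi_i(x)|u|^{\gamma_i-1}$ with $1<\gamma_i<p$ and $\xi_i\in L^{p/(p-\gamma_i)}(\mathbb{R}^N,[0,\infty))$. Suppose $(v_n)$ is a sequence in $L^p(\mathbb{R}^N)$ with $\sup_n\|v_n\|_{L^p}<\infty$ and $v_n\to 0$ in $L^p(K)$ for every compact set $K\subset\mathbb{R}^N$. Then $\int_{\mathbb{R}^N}|f(x,v_n(x))|\,|v_n(x)|\,dx\to 0$ as $n\to\infty$. -/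

import Mathlib

/-!
Each term of the growth bound contributes `γᵢ ∫ ξᵢ |vₙ|^γᵢ`. Hölder's inequality with the
conjugate exponents `p/(p-γᵢ)` and `p/γᵢ` bounds the part of this integral outside a compact set
`K` by `‖ξᵢ‖_{L^{p/(p-γᵢ)}(Kᶜ)} C^{γᵢ/p}`, which is small uniformly in `n` once `K` is large,
and the part on `K` by `‖ξᵢ‖_{L^{p/(p-γᵢ)}} ‖vₙ‖_{L^p(K)}^{γᵢ}`, which tends to zero.
-/

open MeasureTheory Filter Topology

theorem tendsto_nhds_zero_of_le_add {ι κ : Type*} {l : Filter ι} {l' : Filter κ} [l'.NeBot]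
    {u : ι → ℝ} {s : κ → ι → ℝ} {t : κ → ℝ} (hu : ∀ n, 0 ≤ u n)
    (hle : ∀ k n, u n ≤ s k n + t k) (hs : ∀ k, Tendsto (s k) l (𝓝 0))
    (ht : Tendsto t l' (𝓝 0)) : Tendsto u l (𝓝 0) := by
  refine tendsto_order.2 ⟨fun a ha => .of_forall fun n => ha.trans_le (hu n), fun ε hε => ?_⟩
  obtain ⟨k, hk⟩ := (ht.eventually (gt_mem_nhds (half_pos hε))).exists
  filter_upwards [(hs k).eventually (gt_mem_nhds (half_pos hε))] with n hn
  linarith [hle k n]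

theorem Real.holderConjugate_div_sub_div {p g : ℝ} (hg : 0 < g) (hgp : g < p) :
    (p / (p - g)).HolderConjugate (p / g) := by
  have hp : 0 < p := hg.trans hgp
  simpa only [inv_div] using Real.HolderConjugate.inv_inv (div_pos (sub_pos.2 hgp) hp)
    (div_pos hg hp) (by field_simp; ring)

namespace MeasureTheory

section
variable {α : Type*} [MeasurableSpace α] {μ : Measure α}

theorem MemLp.integrable_rpow_of_nonneg {f : α → ℝ} {p : ℝ} (hp : 0 < p) (hf0 : 0 ≤ f)
    (hf : MemLp f (.ofReal p) μ) : Integrable (fun x => f x ^ p) μ := by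
  have := hf.integrable_norm_rpow (by simpa using hp) ENNReal.ofReal_ne_top
  simpa [ENNReal.toReal_ofReal hp.le, Real.norm_eq_abs, abs_of_nonneg (hf0 _)] using this

theorem MemLp.abs_rpow {f : α → ℝ} {p g : ℝ} (hg : 0 < g) (hf : MemLp f (.ofReal p) μ) :
    MemLp (fun x => |f x| ^ g) (.ofReal (p / g)) μ := by
  have h := hf.norm_rpow_div (ENNReal.ofReal g)
  rw [ENNReal.toReal_ofReal hg.le, ← ENNReal.ofReal_div_of_pos hg] at h
  simpa [Real.norm_eq_abs] using h

theorem integrable_mul_abs_rpow {p g : ℝ} (hg : 0 < g) (hgp : g < p) {ξ v : α → ℝ}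
    (hξ : MemLp ξ (.ofReal (p / (p - g))) μ) (hv : MemLp v (.ofReal p) μ) :
    Integrable (fun x => ξ x * |v x| ^ g) μ :=
  haveI := (Real.holderConjugate_div_sub_div hg hgp).ennrealOfReal
  hξ.integrable_mul (hv.abs_rpow hg)

end

section
variable {α : Type*} [TopologicalSpace α] [T2Space α] [SigmaCompactSpace α] [MeasurableSpace α]
  [OpensMeasurableSpace α] {μ : Measure α}

theorem tendsto_setIntegral_compl_compactCovering {f : α → ℝ} (hf : Integrable f μ) :
    Tendsto (fun k => ∫ x in (compactCovering α k)ᶜ, f x ∂μ) atTop (𝓝 0) := by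
  have h := tendsto_setIntegral_of_antitone (μ := μ) (f := f)
    (fun k => (isCompact_compactCovering α k).measurableSet.compl)
    (fun m n hmn => Set.compl_subset_compl.2 (compactCovering_subset α hmn))
    ⟨0, hf.integrableOn⟩
  rwa [← Set.compl_iUnion, iUnion_compactCovering, Set.compl_univ, Measure.restrict_empty,
    integral_zero_measure] at h

theorem tendsto_integral_mul_of_tendsto_setIntegral_rpow {q r C : ℝ} (hqr : q.HolderConjugate r)
    {a : α → ℝ} {b : ℕ → α → ℝ} (ha0 : 0 ≤ a) (ha : MemLp a (.ofReal q) μ)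
    (hb0 : ∀ n, 0 ≤ b n) (hb : ∀ n, MemLp (b n) (.ofReal r) μ)
    (hC : ∀ n, ∫ x, b n x ^ r ∂μ ≤ C)
    (hloc : ∀ K, IsCompact K → Tendsto (fun n => ∫ x in K, b n x ^ r ∂μ) atTop (𝓝 0)) :
    Tendsto (fun n => ∫ x, a x * b n x ∂μ) atTop (𝓝 0) := by
  set K := compactCovering α
  have hq : 0 < 1 / q := one_div_pos.2 hqr.pos
  have hr : 0 < 1 / r := one_div_pos.2 hqr.symm.pos
  have hKm (k : ℕ) : MeasurableSet (K k) := (isCompact_compactCovering α k).measurableSet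
  have haq : Integrable (fun x => a x ^ q) μ := ha.integrable_rpow_of_nonneg hqr.pos ha0
  have hbr (n : ℕ) : Integrable (fun x => b n x ^ r) μ :=
    (hb n).integrable_rpow_of_nonneg hqr.symm.pos (hb0 n)
  have holder (n : ℕ) (s : Set α) : ∫ x in s, a x * b n x ∂μ ≤
      (∫ x in s, a x ^ q ∂μ) ^ (1 / q) * (∫ x in s, b n x ^ r ∂μ) ^ (1 / r) :=
    integral_mul_le_Lp_mul_Lq_of_nonneg hqr (.of_forall ha0) (.of_forall (hb0 n))
      (ha.restrict s) ((hb n).restrict s)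
  refine tendsto_nhds_zero_of_le_add (l' := atTop)
    (s := fun k n => (∫ x, a x ^ q ∂μ) ^ (1 / q) * (∫ x in K k, b n x ^ r ∂μ) ^ (1 / r))
    (t := fun k => (∫ x in (K k)ᶜ, a x ^ q ∂μ) ^ (1 / q) * C ^ (1 / r))
    (fun n => integral_nonneg fun x => mul_nonneg (ha0 x) (hb0 n x)) (fun k n => ?_)
    (fun k => ?_) ?_
  · have hab : Integrable (fun x => a x * b n x) μ :=
      haveI := hqr.ennrealOfReal
      ha.integrable_mul (hb n)
    have haq0 (s : Set α) : 0 ≤ ∫ x in s, a x ^ q ∂μ :=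
      integral_nonneg fun x => Real.rpow_nonneg (ha0 x) q
    have hbr0 (s : Set α) : 0 ≤ ∫ x in s, b n x ^ r ∂μ :=
      integral_nonneg fun x => Real.rpow_nonneg (hb0 n x) r
    have haq_le (s : Set α) : ∫ x in s, a x ^ q ∂μ ≤ ∫ x, a x ^ q ∂μ :=
      setIntegral_le_integral haq (.of_forall fun x => Real.rpow_nonneg (ha0 x) q)
    have hbr_le (s : Set α) : ∫ x in s, b n x ^ r ∂μ ≤ C :=
      (setIntegral_le_integral (hbr n) (.of_forall fun x => Real.rpow_nonneg (hb0 n x) r)).trans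
        (hC n)
    rw [← integral_add_compl (hKm k) hab]
    gcongr ?_ + ?_
    · exact (holder n _).trans (mul_le_mul_of_nonneg_right
        (Real.rpow_le_rpow (haq0 _) (haq_le _) hq.le) (Real.rpow_nonneg (hbr0 _) _))
    · exact (holder n _).trans (mul_le_mul_of_nonneg_left
        (Real.rpow_le_rpow (hbr0 _) (hbr_le _) hr.le) (Real.rpow_nonneg (haq0 _) _))
  · have h := ((hloc _ (isCompact_compactCovering α k)).rpow_const (Or.inr hr.le)).const_mul
      ((∫ x, a x ^ q ∂μ) ^ (1 / q))
    rwa [Real.zero_rpow hr.ne', mul_zero] at h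
  · have h := ((tendsto_setIntegral_compl_compactCovering haq).rpow_const
      (Or.inr hq.le)).mul_const (C ^ (1 / r))
    rwa [Real.zero_rpow hq.ne', zero_mul] at h

theorem tendsto_integral_mul_abs_rpow {p g C : ℝ} (hg : 0 < g) (hgp : g < p) {ξ : α → ℝ}
    {v : ℕ → α → ℝ} (hξ0 : 0 ≤ ξ) (hξ : MemLp ξ (.ofReal (p / (p - g))) μ)
    (hv : ∀ n, MemLp (v n) (.ofReal p) μ) (hC : ∀ n, ∫ x, |v n x| ^ p ∂μ ≤ C)
    (hloc : ∀ K, IsCompact K → Tendsto (fun n => ∫ x in K, |v n x| ^ p ∂μ) atTop (𝓝 0)) :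
    Tendsto (fun n => ∫ x, ξ x * |v n x| ^ g ∂μ) atTop (𝓝 0) := by
  have hpow (t : ℝ) : (|t| ^ g) ^ (p / g) = |t| ^ p := by
    rw [← Real.rpow_mul (abs_nonneg t), mul_div_cancel₀ _ hg.ne']
  refine tendsto_integral_mul_of_tendsto_setIntegral_rpow
    (Real.holderConjugate_div_sub_div hg hgp) hξ0 hξ
    (fun n x => Real.rpow_nonneg (abs_nonneg _) g) (fun n => (hv n).abs_rpow hg) (C := C) ?_ ?_
  · simpa only [hpow] using hC
  · simpa only [hpow] using hloc

end

end MeasureTheory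

theorem stmt5_general (N m : ℕ) (p : ℝ)
    (γ : Fin m → ℝ) (hγ : ∀ i, 1 < γ i ∧ γ i < p)
    (ξ : Fin m → EuclideanSpace ℝ (Fin N) → ℝ) (hξ0 : ∀ i x, 0 ≤ ξ i x)
    (hξ : ∀ i, MemLp (ξ i) (ENNReal.ofReal (p / (p - γ i))) volume)
    (f : EuclideanSpace ℝ (Fin N) → ℝ → ℝ)
    (hf : ∀ x t, |f x t| ≤ ∑ i, γ i * ξ i x * |t| ^ (γ i - 1))
    (v : ℕ → EuclideanSpace ℝ (Fin N) → ℝ)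
    (hv : ∀ n, MemLp (v n) (ENNReal.ofReal p) volume)
    (C : ℝ) (hC : ∀ n, ∫ x, |v n x| ^ p ≤ C)
    (hloc : ∀ K : Set (EuclideanSpace ℝ (Fin N)), IsCompact K →
      Tendsto (fun n => ∫ x in K, |v n x| ^ p) atTop (nhds 0)) :
    Tendsto (fun n => ∫ x, |f x (v n x)| * |v n x|) atTop (nhds 0) := by
  have hγ0 (i : Fin m) : 0 < γ i := zero_lt_one.trans (hγ i).1
  have hint (i : Fin m) (n : ℕ) : Integrable (fun x => γ i * (ξ i x * |v n x| ^ γ i)) :=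
    (integrable_mul_abs_rpow (hγ0 i) (hγ i).2 (hξ i) (hv n)).const_mul (γ i)
  have hlim (i : Fin m) : Tendsto (fun n => ∫ x, γ i * (ξ i x * |v n x| ^ γ i)) atTop (𝓝 0) := by
    simpa only [integral_const_mul, mul_zero] using
      (tendsto_integral_mul_abs_rpow (hγ0 i) (hγ i).2 (hξ0 i) (hξ i) hv hC hloc).const_mul (γ i)
  have hbound (n : ℕ) (x : EuclideanSpace ℝ (Fin N)) :
      |f x (v n x)| * |v n x| ≤ ∑ i, γ i * (ξ i x * |v n x| ^ γ i) := by
    calc |f x (v n x)| * |v n x| ≤ (∑ i, γ i * ξ i x * |v n x| ^ (γ i - 1)) * |v n x| := by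
          gcongr; exact hf x _
      _ = ∑ i, γ i * (ξ i x * |v n x| ^ γ i) := by
        refine Finset.sum_mul .. |>.trans (Finset.sum_congr rfl fun i _ => ?_)
        rw [mul_assoc, mul_assoc, ← Real.rpow_add_one' (abs_nonneg _) (by linarith [hγ0 i]),
          sub_add_cancel]
  refine squeeze_zero (fun n => integral_nonneg fun x => by positivity) (fun n => ?_)
    (by simpa only [Finset.sum_const_zero] using tendsto_finsetSum Finset.univ fun i _ => hlim i)
  rw [← integral_finsetSum _ fun i _ => hint i n]
  exact integral_mono_of_nonneg (.of_forall fun x => by positivity)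
    (integrable_finsetSum _ fun i _ => hint i n) (.of_forall (hbound n))

theorem stmt5 (N m : ℕ) (hm : 1 ≤ m) (p : ℝ) (hp : 1 < p)
    (γ : Fin m → ℝ) (hγ : ∀ i, 1 < γ i ∧ γ i < p)
    (ξ : Fin m → EuclideanSpace ℝ (Fin N) → ℝ) (hξ0 : ∀ i x, 0 ≤ ξ i x)
    (hξ : ∀ i, MemLp (ξ i) (ENNReal.ofReal (p / (p - γ i))) volume)
    (f : EuclideanSpace ℝ (Fin N) → ℝ → ℝ)
    (hf : ∀ x t, |f x t| ≤ ∑ i, γ i * ξ i x * |t| ^ (γ i - 1))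
    (v : ℕ → EuclideanSpace ℝ (Fin N) → ℝ)
    (hv : ∀ n, MemLp (v n) (ENNReal.ofReal p) volume)
    (C : ℝ) (hC : ∀ n, ∫ x, |v n x| ^ p ≤ C)
    (hloc : ∀ K : Set (EuclideanSpace ℝ (Fin N)), IsCompact K →
      Tendsto (fun n => ∫ x in K, |v n x| ^ p) atTop (nhds 0))
    (hfm : ∀ n, AEStronglyMeasurable (fun x => f x (v n x)) volume) :
    Tendsto (fun n => ∫ x, |f x (v n x)| * |v n x|) atTop (nhds 0) :=
  stmt5_general N m p γ hγ ξ hξ0 hξ f hf v hv C hC hloc
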